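/- Assume the Bethe equations hold. Then for every x ∈ ℂ \ {s_1,…,s_m}: ω(x)² − V′(x)ω(x) + ħω′(x) = −ħ ∑_{i=1}^m (V′(x) − V′(s_i))/(x − s_i), where ω′(x) = −ħ∑_{i=1}^m 1/(x−s_i)² is the derivative of ω. -/

import Mathlib

/-!
Writing `f i = 1 / (x - s i)`, the terms `ω² + ħ ω′` leave `ħ²` times the off-diagonal part
`∑_{i ≠ j} f i f j` of `(∑ f i)²`. Partial fractions and symmetrization turn it into
`2 ∑ i, f i ∑_{j ≠ i} 1 / (s i - s j)`, and by the Bethe equations `ħ` times this is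
`∑ i, V′(s i) f i`; subtracting `V′(x) ω` gives the right-hand side.
-/

open Finset Polynomial

section OffDiagonal

variable {ι R : Type*} [Fintype ι] [DecidableEq ι]

theorem Finset.sum_sum_erase_comm [AddCommMonoid R] (g : ι → ι → R) :
    ∑ i, ∑ j ∈ univ.erase i, g i j = ∑ i, ∑ j ∈ univ.erase i, g j i :=
  Finset.sum_comm' fun i j => by simp [ne_comm]

theorem Finset.sq_sum_sub_sum_sq [CommRing R] (f : ι → R) :
    (∑ i, f i) ^ 2 - ∑ i, f i ^ 2 = ∑ i, ∑ j ∈ univ.erase i, f i * f j := by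
  rw [sq, sum_mul_sum, ← sum_sub_distrib]
  refine sum_congr rfl fun i _ => ?_
  rw [← add_sum_erase univ _ (mem_univ i), sq, add_sub_cancel_left]

end OffDiagonal

section PartialFractions

variable {K : Type*} [Field K]

theorem one_div_sub_mul_one_div_sub {x a b : K} (hxa : x ≠ a) (hxb : x ≠ b) (hab : a ≠ b) :
    1 / (x - a) * (1 / (x - b)) = 1 / (x - a) * (1 / (a - b)) + 1 / (x - b) * (1 / (b - a)) := by
  have := sub_ne_zero.2 hxa; have := sub_ne_zero.2 hxb
  have := sub_ne_zero.2 hab; have := sub_ne_zero.2 hab.symm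
  field_simp
  ring

variable {ι : Type*} [Fintype ι] [DecidableEq ι]

-- After partial fractions the two halves of the sum agree once `i` and `j` are swapped.
theorem sum_sum_erase_one_div_sub_mul {s : ι → K} (hs : Function.Injective s) {x : K}
    (hx : ∀ i, x ≠ s i) :
    ∑ i, ∑ j ∈ univ.erase i, 1 / (x - s i) * (1 / (x - s j))
      = 2 * ∑ i, 1 / (x - s i) * ∑ j ∈ univ.erase i, 1 / (s i - s j) := by
  have hpf : ∀ i, ∀ j ∈ univ.erase i, 1 / (x - s i) * (1 / (x - s j))
      = 1 / (x - s i) * (1 / (s i - s j)) + 1 / (x - s j) * (1 / (s j - s i)) :=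
    fun i j hj => one_div_sub_mul_one_div_sub (hx i) (hx j) (hs.ne (ne_of_mem_erase hj).symm)
  rw [sum_congr rfl fun i _ => sum_congr rfl (hpf i), sum_congr rfl fun i _ => sum_add_distrib,
    sum_add_distrib, sum_sum_erase_comm (fun i j => 1 / (x - s j) * (1 / (s j - s i))), two_mul]
  simp only [mul_sum]

end PartialFractions

theorem omega_potential_identity (m : ℕ) (hbar : ℂ) (V : Polynomial ℂ)
    (s : Fin m → ℂ) (hs : Function.Injective s)
    (hBethe : ∀ i, V.derivative.eval (s i)
      = 2 * hbar * ∑ j ∈ univ.erase i, 1 / (s i - s j))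
    (x : ℂ) (hx : ∀ i, x ≠ s i) :
    (hbar * ∑ i, 1 / (x - s i)) ^ 2
        - V.derivative.eval x * (hbar * ∑ i, 1 / (x - s i))
        + hbar * (-hbar * ∑ i, 1 / (x - s i) ^ 2)
      = -hbar * ∑ i, (V.derivative.eval x - V.derivative.eval (s i)) / (x - s i) := by
  set f : Fin m → ℂ := fun i => 1 / (x - s i)
  have hoff : hbar ^ 2 * ((∑ i, f i) ^ 2 - ∑ i, f i ^ 2)
      = hbar * ∑ i, V.derivative.eval (s i) * f i := by
    rw [sq_sum_sub_sum_sq, sum_sum_erase_one_div_sub_mul hs hx, mul_sum, mul_sum, mul_sum]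
    refine sum_congr rfl fun i _ => ?_
    rw [hBethe]
    ring
  simp only [← one_div_pow, div_eq_mul_one_div (_ - _)]
  calc (hbar * ∑ i, f i) ^ 2 - V.derivative.eval x * (hbar * ∑ i, f i)
        + hbar * (-hbar * ∑ i, f i ^ 2)
      = hbar ^ 2 * ((∑ i, f i) ^ 2 - ∑ i, f i ^ 2)
        - hbar * ∑ i, V.derivative.eval x * f i := by rw [← mul_sum]; ring
    _ = -hbar * ∑ i, (V.derivative.eval x - V.derivative.eval (s i)) * f i := by
      rw [hoff]
      simp only [sub_mul, sum_sub_distrib]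
      ring
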